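/- Let T*_a = {x ∈ Ω : p_{a,1}·f_{a,1}(x) ≥ p_{a,0}·f_{a,0}(x)} be the group Bayes classifiers and let D = T*_0 Δ T*_1 be their disagreement region. For any classifier T, the well-defined modification T' = (T ∩ D) ∪ (T*_0 ∩ Dᶜ), which agrees with T on D and with the common prediction of T*_0 and T*_1 outside D, satisfies Acc(T') ≥ Acc(T). -/

import Mathlib

/-! The accuracy of `T` is `Acc(∅) + ½ ∫_T g` with the margin
`g = Σ_a (p_{a,1} f_{a,1} - p_{a,0} f_{a,0})`. Off the disagreement region `D` the two group
margins are both nonnegative on `T*_0` and both negative off it, so `g ≥ 0` on `T*_0 \ D` and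
`g ≤ 0` on `Dᶜ \ T*_0`: passing from `T` to `T'` only adds points with `g ≥ 0` and removes
points with `g ≤ 0`. -/

open MeasureTheory

/-- Accuracy of a classifier `T` (predicting label 1 exactly on `T`):
`Acc(T) = (1/2) Σ_a p_{a,1} ∫_T f_{a,1} dν + (1/2) Σ_a p_{a,0} ∫_{Tᶜ} f_{a,0} dν`.
Groups and labels are indexed by `Bool` (`false = 0`, `true = 1`). -/
noncomputable def accuracy {Ω : Type*} [MeasurableSpace Ω] (ν : Measure Ω)
    (f : Bool → Bool → Ω → ℝ) (p : Bool → Bool → ℝ) (T : Set Ω) : ℝ :=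
  (1/2) * (p false true * ∫ x in T, f false true x ∂ν
      + p true true * ∫ x in T, f true true x ∂ν)
  + (1/2) * (p false false * ∫ x in Tᶜ, f false false x ∂ν
      + p true false * ∫ x in Tᶜ, f true false x ∂ν)

theorem setIntegral_le_setIntegral_of_nonpos_of_nonneg {α : Type*} [MeasurableSpace α]
    {μ : Measure α} {g : α → ℝ} {s t : Set α} (hg : Integrable g μ)
    (hs : MeasurableSet s) (ht : MeasurableSet t)
    (h_nonpos : ∀ x ∈ s \ t, g x ≤ 0) (h_nonneg : ∀ x ∈ t \ s, 0 ≤ g x) :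
    ∫ x in s, g x ∂μ ≤ ∫ x in t, g x ∂μ := by
  rw [← integral_indicator hs, ← integral_indicator ht]
  refine integral_mono (hg.indicator hs) (hg.indicator ht) fun x => ?_
  by_cases hxs : x ∈ s <;> by_cases hxt : x ∈ t
  · simp [hxs, hxt]
  · simpa [hxs, hxt] using h_nonpos x ⟨hxs, hxt⟩
  · simpa [hxs, hxt] using h_nonneg x ⟨hxt, hxs⟩
  · simp [hxs, hxt]

namespace FairClassification

variable {Ω : Type*} {f : Bool → Bool → Ω → ℝ} {p : Bool → Bool → ℝ} {x : Ω}

def groupMargin (f : Bool → Bool → Ω → ℝ) (p : Bool → Bool → ℝ) (a : Bool) (x : Ω) : ℝ :=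
  p a true * f a true x - p a false * f a false x

def margin (f : Bool → Bool → Ω → ℝ) (p : Bool → Bool → ℝ) (x : Ω) : ℝ :=
  groupMargin f p false x + groupMargin f p true x

def bayesClassifier (f : Bool → Bool → Ω → ℝ) (p : Bool → Bool → ℝ) (a : Bool) : Set Ω :=
  {x | p a false * f a false x ≤ p a true * f a true x}

theorem mem_bayesClassifier_iff {a : Bool} :
    x ∈ bayesClassifier f p a ↔ 0 ≤ groupMargin f p a x := by
  rw [groupMargin, sub_nonneg]
  rfl

theorem margin_nonneg_of_mem_bayesClassifier (h₀ : x ∈ bayesClassifier f p false)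
    (h₁ : x ∈ bayesClassifier f p true) : 0 ≤ margin f p x :=
  add_nonneg (mem_bayesClassifier_iff.mp h₀) (mem_bayesClassifier_iff.mp h₁)

theorem margin_nonpos_of_notMem_bayesClassifier (h₀ : x ∉ bayesClassifier f p false)
    (h₁ : x ∉ bayesClassifier f p true) : margin f p x ≤ 0 := by
  rw [mem_bayesClassifier_iff, not_le] at h₀ h₁
  exact (add_neg h₀ h₁).le

variable [MeasurableSpace Ω] {ν : Measure Ω}

theorem measurableSet_bayesClassifier (hf : ∀ a y, Measurable (f a y)) (a : Bool) :
    MeasurableSet (bayesClassifier f p a) :=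
  measurableSet_le ((hf a false).const_mul _) ((hf a true).const_mul _)

theorem integrable_groupMargin (hf : ∀ a y, Integrable (f a y) ν) (a : Bool) :
    Integrable (groupMargin f p a) ν :=
  ((hf a true).const_mul _).sub ((hf a false).const_mul _)

theorem integrable_margin (hf : ∀ a y, Integrable (f a y) ν) : Integrable (margin f p) ν :=
  (integrable_groupMargin hf false).add (integrable_groupMargin hf true)

theorem accuracy_eq_accuracy_empty_add (hf : ∀ a y, Integrable (f a y) ν) {S : Set Ω}
    (hS : MeasurableSet S) :
    accuracy ν f p S = accuracy ν f p ∅ + (1/2) * ∫ x in S, margin f p x ∂ν := by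
  have hg : ∀ a, IntegrableOn (groupMargin f p a) S ν := fun a =>
    (integrable_groupMargin hf a).integrableOn
  simp only [accuracy, Set.compl_empty, Measure.restrict_empty, integral_zero_measure,
    Measure.restrict_univ, setIntegral_compl hS (hf _ _), margin,
    integral_add (hg false) (hg true)]
  simp only [groupMargin]
  rw [integral_sub ((hf _ _).const_mul _).integrableOn ((hf _ _).const_mul _).integrableOn,
    integral_sub ((hf _ _).const_mul _).integrableOn ((hf _ _).const_mul _).integrableOn]
  simp only [integral_const_mul]
  ring

end FairClassification

open FairClassification in
theorem welldefined_modification_improves_accuracy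
    {Ω : Type*} [MeasurableSpace Ω] (ν : Measure Ω)
    (f : Bool → Bool → Ω → ℝ) (p : Bool → Bool → ℝ)
    (hf_meas : ∀ a y, Measurable (f a y))
    (hf_int : ∀ a y, Integrable (f a y) ν)
    (Tstar : Bool → Set Ω)
    (hTstar : ∀ a, Tstar a = {x | p a false * f a false x ≤ p a true * f a true x})
    (D : Set Ω) (hD : D = symmDiff (Tstar false) (Tstar true))
    (T : Set Ω) (hT : MeasurableSet T)
    (T' : Set Ω) (hT' : T' = (T ∩ D) ∪ (Tstar false ∩ Dᶜ)) :
    accuracy ν f p T ≤ accuracy ν f p T' := by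
  obtain rfl : Tstar = bayesClassifier f p := funext hTstar
  have hB := measurableSet_bayesClassifier (p := p) hf_meas
  have hD_meas : MeasurableSet D := hD ▸ (hB false).symmDiff (hB true)
  have hT'_meas : MeasurableSet T' :=
    hT' ▸ (hT.inter hD_meas).union ((hB false).inter hD_meas.compl)
  suffices h : ∫ x in T, margin f p x ∂ν ≤ ∫ x in T', margin f p x ∂ν by
    rw [accuracy_eq_accuracy_empty_add hf_int hT, accuracy_eq_accuracy_empty_add hf_int hT'_meas]
    linarith
  refine setIntegral_le_setIntegral_of_nonpos_of_nonneg (integrable_margin hf_int) hT hT'_meas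
    ?_ ?_
  · rintro x ⟨hxT, hxT'⟩
    simp only [hT', hD, Set.mem_union, Set.mem_inter_iff, Set.mem_compl_iff,
      Set.mem_symmDiff] at hxT'
    exact margin_nonpos_of_notMem_bayesClassifier (by tauto) (by tauto)
  · rintro x ⟨hxT', hxT⟩
    simp only [hT', hD, Set.mem_union, Set.mem_inter_iff, Set.mem_compl_iff,
      Set.mem_symmDiff] at hxT'
    exact margin_nonneg_of_mem_bayesClassifier (by tauto) (by tauto)
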